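/- If p is a time-complexity polynomial with typing Σ, x:T ⊢ p : T_L that is T_L-safe with respect to Σ, x:T, then every occurrence of the cost-type variable x in p is shadowed. -/

import Mathlib

set_option maxHeartbeats 1000000

namespace ATR

noncomputable section

/-! ## Labels and ATR types

Labels `L ∈ (□◊)* ∪ ◊(□◊)*` are represented by natural numbers via the linear
order ε ≤ ◊ ≤ □◊ ≤ ◊□◊ ≤ …; even labels are the oracular ones `(□◊)*` and
odd labels are the computational ones `◊(□◊)*`. -/

abbrev Label := ℕ

def labelOracular (L : Label) : Prop := Even L
def labelComputational (L : Label) : Prop := ¬ Even L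

inductive ATRTy : Type where
  | base : Label → ATRTy
  | arr : ATRTy → ATRTy → ATRTy
deriving DecidableEq, Repr

namespace ATRTy

def tail : ATRTy → Label
  | base L => L
  | arr _ τ => tail τ

def args : ATRTy → List ATRTy
  | base _ => []
  | arr σ τ => σ :: args τ

def shiftBy (k : ℕ) : ATRTy → ATRTy
  | base L => base (L + 2 * k)
  | arr σ τ => arr (shiftBy k σ) (shiftBy k τ)

def arity : ATRTy → ℕ
  | base _ => 0
  | arr _ τ => arity τ + 1

end ATRTy

def mkArr : List Label → Label → ATRTy
  | [], b0 => .base b0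
  | b :: bs, b0 => .arr (.base b) (mkArr bs b0)

/-- The subtype relation on ATR types. -/
inductive ATRSub : ATRTy → ATRTy → Prop where
  | base {L L'} : L ≤ L' → ATRSub (.base L) (.base L')
  | arr {σ σ' τ τ'} : ATRSub σ' σ → ATRSub τ τ' → ATRSub (.arr σ τ) (.arr σ' τ')

/-- The shifts-to relation on ATR types. -/
def ShiftsTo (σ τ : ATRTy) : Prop := ∃ k, τ = σ.shiftBy k

def Predicative (σ : ATRTy) : Prop := ∀ σi ∈ σ.args, σi.tail ≤ σ.tail
def Flat (σ : ATRTy) : Prop := ∃ σi ∈ σ.args, σi.tail = σ.tail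
def StrictTy (σ : ATRTy) : Prop := ¬ Flat σ
/-- Strict and predicative. -/
def SPty (σ : ATRTy) : Prop := StrictTy σ ∧ Predicative σ

/-! ## Time-complexity types -/

inductive TCTy : Type where
  | T : TCTy
  | TL : Label → TCTy
  | prod : TCTy → TCTy → TCTy
  | arr : TCTy → TCTy → TCTy
deriving DecidableEq, Repr

/-- The potential type `⟨τ⟩` of an ATR type. -/
@[reducible] def pott : ATRTy → TCTy
  | .base L => .TL L
  | .arr σ τ => .arr (pott σ) (.prod .T (pott τ))

/-- The time-complexity type `⟦τ⟧ = T × ⟨τ⟩` of an ATR type. -/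
abbrev tct (τ : ATRTy) : TCTy := .prod .T (pott τ)

namespace TCTy

def tail : TCTy → TCTy
  | T => T
  | TL L => TL L
  | prod _ b => tail b
  | arr _ b => tail b

def argsT : TCTy → List TCTy
  | arr a b => a :: argsT b
  | _ => []

def isBase : TCTy → Prop
  | T => True
  | TL _ => True
  | _ => False

def computationalB : TCTy → Prop
  | T => True
  | TL L => ¬ Even L
  | _ => False

def oracularB : TCTy → Prop
  | TL L => Even L
  | _ => False

def isArrB : TCTy → Bool
  | arr _ _ => true
  | _ => false

def shiftBy (k : ℕ) : TCTy → TCTy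
  | T => T
  | TL L => TL (L + 2 * k)
  | prod a b => prod (shiftBy k a) (shiftBy k b)
  | arr a b => arr (shiftBy k a) (shiftBy k b)

end TCTy

/-- Subtyping of time-complexity types. -/
inductive TCSub : TCTy → TCTy → Prop where
  | TT : TCSub .T .T
  | TLT {L} : TCSub (.TL L) .T
  | TLle {L L'} : L ≤ L' → TCSub (.TL L) (.TL L')
  | prod {a a' b b'} : TCSub a a' → TCSub b b' → TCSub (.prod a b) (.prod a' b')
  | arr {a a' b b'} : TCSub a' a → TCSub b b' → TCSub (.arr a b) (.arr a' b')

def TCSubStrict (a b : TCTy) : Prop := TCSub a b ∧ a ≠ b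

def TCShift (γ δ : TCTy) : Prop := ∃ k, δ = γ.shiftBy k

def TCTy.predicativeT (γ : TCTy) : Prop := ∀ δ ∈ γ.argsT, TCSub δ.tail γ.tail
def TCTy.impredicativeT (γ : TCTy) : Prop := ¬ γ.predicativeT

/-- The condition under which the argument of an application `t s`,
`t : σ → τ`, is shadowed: `σ → τ` is impredicative with
`tail τ` strictly a subtype of `tail σ`. -/
def ShadowApp (γ δ : TCTy) : Prop :=
  (TCTy.arr γ δ).impredicativeT ∧ TCSubStrict δ.tail γ.tail

/-! ## Semantics of time-complexity types: unary numerals -/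

@[reducible] def TCTy.sem : TCTy → Type
  | T => ℕ
  | TL _ => ℕ
  | prod a b => a.sem × b.sem
  | arr a b => a.sem → b.sem

theorem TCSub.semEq {γ δ : TCTy} (h : TCSub γ δ) : γ.sem = δ.sem := by
  induction h with
  | TT => rfl
  | TLT => rfl
  | TLle _ => rfl
  | prod _ _ ih1 ih2 => simp only [TCTy.sem]; rw [ih1, ih2]
  | arr _ _ ih1 ih2 => simp only [TCTy.sem]; rw [ih1, ih2]

theorem TCTy.sem_shiftBy (k : ℕ) : ∀ γ : TCTy, (γ.shiftBy k).sem = γ.sem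
  | .T => rfl
  | .TL _ => rfl
  | .prod a b => by
      simp only [TCTy.shiftBy, TCTy.sem]
      rw [sem_shiftBy k a, sem_shiftBy k b]
  | .arr a b => by
      simp only [TCTy.shiftBy, TCTy.sem]
      rw [sem_shiftBy k a, sem_shiftBy k b]

theorem TCShift.semEq {γ δ : TCTy} (h : TCShift γ δ) : γ.sem = δ.sem := by
  obtain ⟨k, rfl⟩ := h
  exact (TCTy.sem_shiftBy k γ).symm

def SemEnv (Θ : List TCTy) : Type := ∀ i : Fin Θ.length, (Θ.get i).sem

def SemEnv.nil : SemEnv [] := fun i => i.elim0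

def SemEnv.cons {γ : TCTy} {Θ : List TCTy} (x : γ.sem) (e : SemEnv Θ) :
    SemEnv (γ :: Θ) :=
  fun i => Fin.cases (motive := fun i => ((γ :: Θ).get i).sem) x (fun j => e j) i

/-- Pointwise order on the semantics of a time-complexity type. -/
def semLe : (γ : TCTy) → γ.sem → γ.sem → Prop
  | .T, x, y => x ≤ y
  | .TL _, x, y => x ≤ y
  | .prod a b, x, y => semLe a x.1 y.1 ∧ semLe b x.2 y.2
  | .arr a b, fx, fy => ∀ z : a.sem, semLe b (fx z) (fy z)

def oneSem : (γ : TCTy) → γ.sem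
  | .T => 1
  | .TL _ => 1
  | .prod a b => (oneSem a, oneSem b)
  | .arr _ b => fun _ => oneSem b

def toNum : (γ : TCTy) → γ.sem → ℕ
  | .T, x => x
  | .TL _, x => x
  | .prod _ _, _ => 0
  | .arr _ _, _ => 0

def baseAdd : {γ : TCTy} → γ.computationalB → γ.sem → γ.sem → γ.sem
  | .T, _, x, y => x + y
  | .TL _, _, x, y => x + y
  | .prod _ _, h, _, _ => False.elim h
  | .arr _ _, h, _, _ => False.elim h

def baseMul : {γ : TCTy} → γ.computationalB → γ.sem → γ.sem → γ.sem
  | .T, _, x, y => x * y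
  | .TL _, _, x, y => x * y
  | .prod _ _, h, _, _ => False.elim h
  | .arr _ _, h, _, _ => False.elim h

def baseMax : {γ : TCTy} → γ.isBase → γ.sem → γ.sem → γ.sem
  | .T, _, x, y => max x y
  | .TL _, _, x, y => max x y
  | .prod _ _, h, _, _ => False.elim h
  | .arr _ _, h, _, _ => False.elim h

/-! ## Second-order time-complexity polynomials (intrinsically typed) -/

/-- Interpretation of the time-complexity oracle symbols. -/
def OrcI : Type := String → (γ : TCTy) → γ.sem

inductive Poly : List TCTy → TCTy → Type where
  | eps {Θ} : Poly Θ (.TL 0)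
  | zeros {Θ} (n : ℕ) : Poly Θ (.TL 1)
  | orc {Θ} (name : String) (γ : TCTy) : Poly Θ γ
  | var {Θ} (i : Fin (List.length Θ)) : Poly Θ (Θ.get i)
  | shiftR {Θ γ δ} : Poly Θ γ → TCShift γ δ → Poly Θ δ
  | sub {Θ γ δ} : Poly Θ γ → TCSub γ δ → Poly Θ δ
  | add {Θ γ} (h : γ.computationalB) : Poly Θ γ → Poly Θ γ → Poly Θ γ
  | mul {Θ γ} (h : γ.computationalB) : Poly Θ γ → Poly Θ γ → Poly Θ γ
  | pmax {Θ γ} (h : γ.isBase) : Poly Θ γ → Poly Θ γ → Poly Θ γ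
  | lam {Θ γ δ} : Poly (γ :: Θ) δ → Poly Θ (.arr γ δ)
  | app {Θ γ δ} : Poly Θ (.arr γ δ) → Poly Θ γ → Poly Θ δ
  | pair {Θ γ} : Poly Θ .T → Poly Θ γ → Poly Θ (.prod .T γ)
  | cost {Θ γ} : Poly Θ (.prod .T γ) → Poly Θ .T
  | pot {Θ γ} : Poly Θ (.prod .T γ) → Poly Θ γ

def Poly.sem (OI : OrcI) : {Θ : List TCTy} → {γ : TCTy} → Poly Θ γ → SemEnv Θ → γ.sem
  | _, _, .eps, _ => 0
  | _, _, .zeros n, _ => n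
  | _, _, .orc name γ, _ => OI name γ
  | _, _, .var i, e => e i
  | _, _, .shiftR p h, e => cast h.semEq (Poly.sem OI p e)
  | _, _, .sub p h, e => cast h.semEq (Poly.sem OI p e)
  | _, _, .add h p q, e => baseAdd h (Poly.sem OI p e) (Poly.sem OI q e)
  | _, _, .mul h p q, e => baseMul h (Poly.sem OI p e) (Poly.sem OI q e)
  | _, _, .pmax h p q, e => baseMax h (Poly.sem OI p e) (Poly.sem OI q e)
  | _, _, .lam p, e => fun x => Poly.sem OI p (SemEnv.cons x e)
  | _, _, .app p q, e => (Poly.sem OI p e) (Poly.sem OI q e)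
  | _, _, .pair p q, e => (Poly.sem OI p e, Poly.sem OI q e)
  | _, _, .cost p, e => (Poly.sem OI p e).1
  | _, _, .pot p, e => (Poly.sem OI p e).2

/-! ### Renaming / weakening -/

structure Ren (Θ Θ' : List TCTy) : Type where
  map : Fin Θ.length → Fin Θ'.length
  ok : ∀ i, Θ'.get (map i) = Θ.get i

def Ren.lift {Θ Θ' : List TCTy} (γ : TCTy) (ρ : Ren Θ Θ') : Ren (γ :: Θ) (γ :: Θ') where
  map := fun i =>
    Fin.cases (motive := fun _ => Fin (γ :: Θ').length)
      (⟨0, by simp⟩ : Fin (γ :: Θ').length) (fun j => (ρ.map j).succ) i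
  ok := by
    intro i
    refine Fin.cases ?_ ?_ i
    · rfl
    · intro j
      exact ρ.ok j

def Poly.rename : {Θ Θ' : List TCTy} → {γ : TCTy} → Poly Θ γ → Ren Θ Θ' → Poly Θ' γ
  | _, _, _, .eps, _ => .eps
  | _, _, _, .zeros n, _ => .zeros n
  | _, _, _, .orc name γ, _ => .orc name γ
  | _, _, _, .var i, ρ => (ρ.ok i) ▸ Poly.var (ρ.map i)
  | _, _, _, .shiftR p h, ρ => .shiftR (Poly.rename p ρ) h
  | _, _, _, .sub p h, ρ => .sub (Poly.rename p ρ) h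
  | _, _, _, .add h p q, ρ => .add h (Poly.rename p ρ) (Poly.rename q ρ)
  | _, _, _, .mul h p q, ρ => .mul h (Poly.rename p ρ) (Poly.rename q ρ)
  | _, _, _, .pmax h p q, ρ => .pmax h (Poly.rename p ρ) (Poly.rename q ρ)
  | _, _, _, .lam p, ρ => .lam (Poly.rename p (ρ.lift _))
  | _, _, _, .app p q, ρ => .app (Poly.rename p ρ) (Poly.rename q ρ)
  | _, _, _, .pair p q, ρ => .pair (Poly.rename p ρ) (Poly.rename q ρ)
  | _, _, _, .cost p, ρ => .cost (Poly.rename p ρ)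
  | _, _, _, .pot p, ρ => .pot (Poly.rename p ρ)

def Poly.weaken {Θ : List TCTy} {γ : TCTy} (δ : TCTy) (p : Poly Θ γ) : Poly (δ :: Θ) γ :=
  p.rename ⟨fun i => i.succ, fun _ => rfl⟩

/-! ### Shadowing, strictness, chariness, safety -/

/-- `AllShadowed k p` holds when every occurrence of the free variable
with de Bruijn index `k` in `p` is shadowed. -/
def AllShadowed : ℕ → {Θ : List TCTy} → {γ : TCTy} → Poly Θ γ → Prop
  | _, _, _, .eps => True
  | _, _, _, .zeros _ => True
  | _, _, _, .orc _ _ => True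
  | k, _, _, .var i => (i : ℕ) ≠ k
  | k, _, _, .shiftR p _ => AllShadowed k p
  | k, _, _, .sub p _ => AllShadowed k p
  | k, _, _, .add _ p q => AllShadowed k p ∧ AllShadowed k q
  | k, _, _, .mul _ p q => AllShadowed k p ∧ AllShadowed k q
  | k, _, _, .pmax _ p q => AllShadowed k p ∧ AllShadowed k q
  | k, _, _, .lam p => AllShadowed (k + 1) p
  | k, _, _, @Poly.app _ γ δ p q => AllShadowed k p ∧ (ShadowApp γ δ ∨ AllShadowed k q)
  | k, _, _, .pair p q => AllShadowed k p ∧ AllShadowed k q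
  | k, _, _, .cost p => AllShadowed k p
  | k, _, _, .pot p => AllShadowed k p

/-- Every unshadowed free-variable occurrence in `p` has a type whose tail is
strictly a subtype of `b`. -/
def VarsBelow (b : TCTy) {Θ : List TCTy} {γ : TCTy} (p : Poly Θ γ) : Prop :=
  ∀ j : Fin Θ.length, TCSubStrict ((Θ.get j).tail) b ∨ AllShadowed (j : ℕ) p

/-- `b`-strict potential polynomials. -/
def StrictPoly (b : TCTy) {Θ : List TCTy} {γ : TCTy} (p : Poly Θ γ) : Prop :=
  TCSub γ.tail b ∧ VarsBelow b p

/-- The atoms `(v q_1 … q_k)` of `b`-chary polynomials. -/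
inductive AtomPoly (b : TCTy) : {Θ : List TCTy} → {γ : TCTy} → Poly Θ γ → Prop where
  | var {Θ} (i : Fin (List.length Θ)) : AtomPoly b (Poly.var (Θ := Θ) i)
  | orc {Θ} (name : String) (γ : TCTy) : AtomPoly b (Poly.orc (Θ := Θ) name γ)
  | app {Θ γ δ} {t : Poly Θ (.arr γ δ)} {q : Poly Θ γ} :
      AtomPoly b t → StrictPoly b q → AtomPoly b (t.app q)
  | pot {Θ γ} {t : Poly Θ (.prod .T γ)} : AtomPoly b t → AtomPoly b t.pot

/-- `b`-chary polynomials: a max of zero or more atoms. -/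
inductive CharyPoly (b : TCTy) : {Θ : List TCTy} → {γ : TCTy} → Poly Θ γ → Prop where
  | zero {Θ} : CharyPoly b (Poly.eps (Θ := Θ))
  | atom {Θ γ} {p : Poly Θ γ} : AtomPoly b p → CharyPoly b p
  | max {Θ γ} {h : TCTy.isBase γ} {p q : Poly Θ γ} :
      CharyPoly b p → CharyPoly b q → CharyPoly b (.pmax h p q)
  | coe {Θ γ δ} {p : Poly Θ γ} (h : TCSub γ δ) : CharyPoly b p → CharyPoly b (p.sub h)

/-- `b`-safe polynomials. -/
inductive SafePoly : TCTy → {Θ : List TCTy} → {γ : TCTy} → Poly Θ γ → Prop where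
  | comp {b : TCTy} {Θ : List TCTy} {γ : TCTy} {h : γ.computationalB} {q r : Poly Θ γ} :
      b.computationalB → StrictPoly b q → CharyPoly b r → SafePoly b (.add h q r)
  | orac {b : TCTy} {Θ : List TCTy} {γ : TCTy} {h : γ.isBase} {q r : Poly Θ γ} :
      b.oracularB → StrictPoly b q → CharyPoly b r → SafePoly b (.pmax h q r)
  | arr {b : TCTy} {Θ : List TCTy} {γ δ : TCTy} {p : Poly Θ (.arr γ (.prod .T δ))} :
      SafePoly b (Poly.pot ((p.weaken γ).app (Poly.var ⟨0, by simp⟩))) →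
      SafePoly b p
  | tc {b : TCTy} {Θ : List TCTy} {γ : TCTy} {p : Poly Θ (.prod .T γ)} :
      SafePoly b p.pot → SafePoly b p

/-! ## ATR expressions -/

inductive Tm : Type where
  | var (x : String)
  | oracle (name : String) (σ : ATRTy) (args : List (List Bool))
  | const (a : List Bool)
  | lam (x : String) (t : Tm)
  | app (s t : Tm)
  | c (b : Bool) (s : Tm)
  | d (s : Tm)
  | tst (b : Bool) (s : Tm)
  | cond (s t0 t1 : Tm)
  | down (s t : Tm)
  | crec (a : List Bool) (f : String) (t : Tm)
deriving DecidableEq, Repr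

def lams (vs : List String) (t : Tm) : Tm := vs.foldr .lam t
def apps (t : Tm) (ts : List Tm) : Tm := ts.foldl .app t

def occurs (f : String) : Tm → Bool
  | .var x => x == f
  | .oracle _ _ _ => false
  | .const _ => false
  | .lam x t => if x == f then false else occurs f t
  | .app s t => occurs f s || occurs f t
  | .c _ s => occurs f s
  | .d s => occurs f s
  | .tst _ s => occurs f s
  | .cond s t0 t1 => occurs f s || occurs f t0 || occurs f t1
  | .down s t => occurs f s || occurs f t
  | .crec _ g t => if g == f then false else occurs f t

def Freev (f : String) (t : Tm) : Prop := occurs f t = true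

instance (f : String) (t : Tm) : Decidable (Freev f t) :=
  inferInstanceAs (Decidable (_ = true))

def NoCrec : Tm → Prop
  | .crec _ _ _ => False
  | .lam _ t => NoCrec t
  | .app s t => NoCrec s ∧ NoCrec t
  | .c _ s => NoCrec s
  | .d s => NoCrec s
  | .tst _ s => NoCrec s
  | .cond s t0 t1 => NoCrec s ∧ NoCrec t0 ∧ NoCrec t1
  | .down s t => NoCrec s ∧ NoCrec t
  | _ => True

def NoOracle : Tm → Prop
  | .oracle _ _ _ => False
  | .lam _ t => NoOracle t
  | .app s t => NoOracle s ∧ NoOracle t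
  | .c _ s => NoOracle s
  | .d s => NoOracle s
  | .tst _ s => NoOracle s
  | .cond s t0 t1 => NoOracle s ∧ NoOracle t0 ∧ NoOracle t1
  | .down s t => NoOracle s ∧ NoOracle t
  | .crec _ _ t => NoOracle t
  | _ => True

inductive Subterm : Tm → Tm → Prop where
  | refl (t : Tm) : Subterm t t
  | lam {s t x} : Subterm s t → Subterm s (.lam x t)
  | app1 {s t1 t2} : Subterm s t1 → Subterm s (.app t1 t2)
  | app2 {s t1 t2} : Subterm s t2 → Subterm s (.app t1 t2)
  | c {s t b} : Subterm s t → Subterm s (.c b t)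
  | d {s t} : Subterm s t → Subterm s (.d t)
  | tst {s t b} : Subterm s t → Subterm s (.tst b t)
  | cond1 {s t t0 t1} : Subterm s t → Subterm s (.cond t t0 t1)
  | cond2 {s t t0 t1} : Subterm s t0 → Subterm s (.cond t t0 t1)
  | cond3 {s t t0 t1} : Subterm s t1 → Subterm s (.cond t t0 t1)
  | down1 {s t0 t1} : Subterm s t0 → Subterm s (.down t0 t1)
  | down2 {s t0 t1} : Subterm s t1 → Subterm s (.down t0 t1)
  | crec {s t a f} : Subterm s t → Subterm s (.crec a f t)

/-- Plain affine recursive definitions of a `k`-ary function variable `f`. -/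
inductive PlainAff (f : String) (k : ℕ) : Tm → Prop where
  | nofv {t} : ¬ Freev f t → PlainAff f k t
  | capp {ts : List Tm} :
      ts.length = k → (∀ s ∈ ts, ¬ Freev f s) →
      PlainAff f k (apps (.var f) ts)
  | cond {s t0 t1} :
      ¬ Freev f s → PlainAff f k t0 → PlainAff f k t1 →
      PlainAff f k (.cond s t0 t1)
  | cop {b s} : PlainAff f k s → PlainAff f k (.c b s)
  | dop {s} : PlainAff f k s → PlainAff f k (.d s)
  | tstop {b s} : PlainAff f k s → PlainAff f k (.tst b s)
  | down {s0 s1} : PlainAff f k s0 → ¬ Freev f s1 → PlainAff f k (.down s0 s1)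
  | oper {s : Tm} {ts : List Tm} {i : ℕ} (hi : i < ts.length) :
      ¬ Freev f s → PlainAff f k (ts.get ⟨i, hi⟩) →
      (∀ j (hj : j < ts.length), j ≠ i → ¬ Freev f (ts.get ⟨j, hj⟩)) →
      PlainAff f k (apps s ts)
  | letb {xs : List String} {s : Tm} {ts : List Tm} :
      ts.length = xs.length → PlainAff f k s → (∀ u ∈ ts, ¬ Freev f u) →
      PlainAff f k (apps (lams xs s) ts)

/-! ## Closures and call-by-value evaluation with cost and recursion depth -/

inductive Clo : Type where
  | mk : Tm → List (String × Clo) → Clo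

abbrev REnv := List (String × Clo)

def lookup : REnv → String → Option Clo
  | [], _ => none
  | (y, c) :: ρ, x => if x = y then some c else lookup ρ x

def IsValTm : Tm → Prop
  | .const _ => True
  | .lam _ _ => True
  | .oracle _ _ _ => True
  | _ => False

def IsVal : Clo → Prop
  | .mk z _ => IsValTm z

def envCost : Tm → ℕ
  | .const a => max 1 a.length
  | _ => 1

/-- An oracle interpretation: fully applied behaviour of each oracle symbol. -/
def Orc : Type := String → List (List Bool) → List Bool

/-- The result of applying an oracle value to a string argument. -/
def orcApp (O : Orc) (name : String) (σ : ATRTy) (args : List (List Bool))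
    (a : List Bool) : Clo :=
  if σ.arity ≤ args.length + 1 then .mk (.const (O name (args ++ [a]))) []
  else .mk (.oracle name σ (args ++ [a])) []

/-- `EvalC O cnt c v n d`: the closure `c` evaluates to the value `v` with an
evaluation derivation of cost `n` containing `d` (weighted) uses of the
`crec` axiom; the weight of a use of the `crec` axiom on a term `u`
is `cnt u`. -/
inductive EvalC (O : Orc) (cnt : Tm → ℕ) : Clo → Clo → ℕ → ℕ → Prop where
  | val {z θ} : IsValTm z → EvalC O cnt (.mk z θ) (.mk z θ) 1 0
  | crec {a : List Bool} {f : String} {vs : List String} {t : Tm} {ρ : REnv}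
      (hne : vs ≠ []) :
      EvalC O cnt (.mk (.crec a f (lams vs t)) ρ)
        (.mk (lams vs (.cond (.down (.c false (.const a)) (.c false (.var vs.headI)))
                t (.const [])))
          ((f, Clo.mk (.crec (false :: a) f (lams vs t)) ρ) :: ρ))
        1 (cnt (.crec a f (lams vs t)))
  | envv {x ρ c z θ n d} :
      lookup ρ x = some c → EvalC O cnt c (.mk z θ) n d →
      EvalC O cnt (.mk (.var x) ρ) (.mk z θ) (n + envCost z) d
  | cA {b s ρ a θ n d} :
      EvalC O cnt (.mk s ρ) (.mk (.const a) θ) n d →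
      EvalC O cnt (.mk (.c b s) ρ) (.mk (.const (b :: a)) θ) (n + 1) d
  | d0 {s ρ θ n d} :
      EvalC O cnt (.mk s ρ) (.mk (.const []) θ) n d →
      EvalC O cnt (.mk (.d s) ρ) (.mk (.const []) θ) (n + 1) d
  | d1 {s ρ b a θ n d} :
      EvalC O cnt (.mk s ρ) (.mk (.const (b :: a)) θ) n d →
      EvalC O cnt (.mk (.d s) ρ) (.mk (.const a) θ) (n + 1) d
  | tst1 {b s ρ a θ n d} :
      EvalC O cnt (.mk s ρ) (.mk (.const (b :: a)) θ) n d →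
      EvalC O cnt (.mk (.tst b s) ρ) (.mk (.const [false]) []) (n + 1) d
  | tst0 {b s ρ a θ n d} :
      EvalC O cnt (.mk s ρ) (.mk (.const a) θ) n d →
      (∀ a', a ≠ b :: a') →
      EvalC O cnt (.mk (.tst b s) ρ) (.mk (.const []) []) (n + 1) d
  | down0 {s t ρ as' at' θs θt ns nt ds dt} :
      EvalC O cnt (.mk s ρ) (.mk (.const as') θs) ns ds →
      EvalC O cnt (.mk t ρ) (.mk (.const at') θt) nt dt →
      as'.length ≤ at'.length →
      EvalC O cnt (.mk (.down s t) ρ) (.mk (.const as') θs)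
        (ns + nt + (2 * at'.length + 1)) (ds + dt)
  | down1 {s t ρ as' at' θs θt ns nt ds dt} :
      EvalC O cnt (.mk s ρ) (.mk (.const as') θs) ns ds →
      EvalC O cnt (.mk t ρ) (.mk (.const at') θt) nt dt →
      at'.length < as'.length →
      EvalC O cnt (.mk (.down s t) ρ) (.mk (.const []) [])
        (ns + nt + (2 * at'.length + 1)) (ds + dt)
  | if0 {s t0 t1 ρ a θ v ns n0 ds d0} :
      EvalC O cnt (.mk s ρ) (.mk (.const a) θ) ns ds → a ≠ [] →
      EvalC O cnt (.mk t0 ρ) v n0 d0 →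
      EvalC O cnt (.mk (.cond s t0 t1) ρ) v (ns + n0 + 1) (ds + d0)
  | if1 {s t0 t1 ρ θ v ns n1 ds d1} :
      EvalC O cnt (.mk s ρ) (.mk (.const []) θ) ns ds →
      EvalC O cnt (.mk t1 ρ) v n1 d1 →
      EvalC O cnt (.mk (.cond s t0 t1) ρ) v (ns + n1 + 1) (ds + d1)
  | app {s t ρ x s' θ' w v n1 n2 n3 d1 d2 d3} :
      EvalC O cnt (.mk s ρ) (.mk (.lam x s') θ') n1 d1 →
      EvalC O cnt (.mk t ρ) w n2 d2 →
      EvalC O cnt (.mk s' ((x, w) :: θ')) v n3 d3 →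
      EvalC O cnt (.mk (.app s t) ρ) v (n1 + n2 + n3 + 1) (d1 + d2 + d3)
  | appO0 {s t ρ name σ args a θ' θ n1 n2 d1 d2} :
      EvalC O cnt (.mk s ρ) (.mk (.oracle name σ args) θ') n1 d1 →
      EvalC O cnt (.mk t ρ) (.mk (.const a) θ) n2 d2 →
      σ.arity = args.length + 1 →
      EvalC O cnt (.mk (.app s t) ρ) (.mk (.const (O name (args ++ [a]))) [])
        (n1 + n2 + max 1 (O name (args ++ [a])).length) (d1 + d2)
  | appO1 {s t ρ name σ args a θ' θ n1 n2 d1 d2} :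
      EvalC O cnt (.mk s ρ) (.mk (.oracle name σ args) θ') n1 d1 →
      EvalC O cnt (.mk t ρ) (.mk (.const a) θ) n2 d2 →
      args.length + 1 < σ.arity →
      EvalC O cnt (.mk (.app s t) ρ) (.mk (.oracle name σ (args ++ [a])) [])
        (n1 + n2 + 1) (d1 + d2)

def cnt1 : Tm → ℕ := fun _ => 1

/-- The ordinary evaluation relation (existence of an evaluation derivation),
with cost. -/
def Evals (O : Orc) (c v : Clo) (n : ℕ) : Prop := ∃ d, EvalC O cnt1 c v n d

def EvalE (O : Orc) (c v : Clo) : Prop := ∃ n d, EvalC O cnt1 c v n d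

/-! ## Time-complexity semantics and the bounding relations -/

abbrev PotSem (σ : ATRTy) : Type := (pott σ).sem
abbrev TCSemA (σ : ATRTy) : Type := (tct σ).sem

/-- The potential bounding relation `⟨z,θ⟩ ⊑_pot q`. -/
def PotBound (O : Orc) : (τ : ATRTy) → Clo → PotSem τ → Prop
  | .base _, .mk (.const a) _, q => a.length ≤ q
  | .base _, .mk _ _, _ => False
  | .arr σ τ, .mk (.lam x body) θ, q =>
      ∀ (w : Clo) (p : PotSem σ), IsVal w → PotBound O σ w p →
        ∃ v n dep, IsVal v ∧ EvalC O cnt1 (.mk body ((x, w) :: θ)) v n dep ∧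
          n ≤ (q p).1 ∧ PotBound O τ v (q p).2
  | .arr σ τ, .mk (.oracle name σ' args) _, q =>
      ∀ (a : List Bool) (θw : REnv) (p : PotSem σ),
        PotBound O σ (.mk (.const a) θw) p →
        ∃ v n dep, IsVal v ∧ EvalC O cnt1 (orcApp O name σ' args a) v n dep ∧
          n ≤ (q p).1 ∧ PotBound O τ v (q p).2
  | .arr _ _, .mk _ _, _ => False

/-- The bounding relation `⟨t,ρ⟩ ⊑ χ` for closures. -/
def CloBound (O : Orc) (τ : ATRTy) (c : Clo) (χ : TCSemA τ) : Prop :=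
  ∃ v n dep, IsVal v ∧ EvalC O cnt1 c v n dep ∧ n ≤ χ.1 ∧ PotBound O τ v χ.2

/-- Time-complexity environments (assigning a time complexity to every
variable at every type). -/
def TCEnvA : Type := String → (σ : ATRTy) → TCSemA σ

def updTC (ϱ : TCEnvA) (x : String) (σ : ATRTy) (χ : TCSemA σ) : TCEnvA :=
  fun y τ =>
    if hy : y = x then
      (if hτ : τ = σ then cast (by rw [hτ]) χ else ϱ y τ)
    else ϱ y τ

abbrev Ctx := List (String × ATRTy)

/-- `ρ ⊑ ϱ` : the bounding relation between evaluation environments and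
time-complexity environments, relative to a typing context. -/
def EnvBound (O : Orc) (Γ : Ctx) (ρ : REnv) (ϱ : TCEnvA) : Prop :=
  ∀ x σ, (x, σ) ∈ Γ → CloBound O σ (.mk (.var x) ρ) (ϱ x σ)

/-- `t ⊑ X` : the bounding relation between terms and time-complexity
denotations. -/
def TermBound (O : Orc) (Γ Δ : Ctx) (τ : ATRTy) (t : Tm) (X : TCEnvA → TCSemA τ) : Prop :=
  ∀ (ρ : REnv) (ϱ : TCEnvA), EnvBound O (Γ ++ Δ) ρ ϱ → CloBound O τ (.mk t ρ) (X ϱ)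

/-! ## ATR typing -/

inductive Typing : Ctx → Ctx → Tm → ATRTy → Type where
  | zeroI {Γ Δ} : Typing Γ Δ (.const []) (.base 0)
  | constI {Γ Δ} (a : List Bool) : Typing Γ Δ (.const a) (.base 1)
  | oracleI {Γ Δ} (name : String) (σ : ATRTy) : Typing Γ Δ (.oracle name σ []) σ
  | intId {Γ Δ x σ} : (x, σ) ∈ Γ → Typing Γ Δ (.var x) σ
  | affId {Γ Δ x σ} : (x, σ) ∈ Δ → Typing Γ Δ (.var x) σ
  | shift {Γ s σ τ} : Typing Γ [] s σ → ShiftsTo σ τ → Typing Γ [] s τ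
  | sub {Γ Δ s σ τ} : Typing Γ Δ s σ → ATRSub σ τ → Typing Γ Δ s τ
  | cI {Γ Δ s L} (b : Bool) :
      Typing Γ Δ s (.base L) → labelComputational L → Typing Γ Δ (.c b s) (.base L)
  | dI {Γ Δ s L} : Typing Γ Δ s (.base L) → Typing Γ Δ (.d s) (.base L)
  | tI {Γ Δ s L} (b : Bool) : Typing Γ Δ s (.base L) → Typing Γ Δ (.tst b s) (.base L)
  | downI {Γ Δ s t L0 L1} :
      Typing Γ Δ s (.base L0) → Typing Γ [] t (.base L1) →
      Typing Γ Δ (.down s t) (.base L1)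
  | ifI {Γ Δ0 Δ1 s t0 t1 L L'} :
      Typing Γ [] s (.base L) → Typing Γ Δ0 t0 (.base L') → Typing Γ Δ1 t1 (.base L') →
      Typing Γ (Δ0 ++ Δ1) (.cond s t0 t1) (.base L')
  | lamI {Γ Δ v σ τ t} : Typing ((v, σ) :: Γ) Δ t τ → Typing Γ Δ (.lam v t) (.arr σ τ)
  | appE {Γ Δ0 Δ1 s t σ τ} :
      Typing Γ Δ0 s (.arr σ τ) → Typing Γ Δ1 t σ →
      (Δ0 = [] ∨ Δ1 = []) → (Δ1 ≠ [] → ∃ L, σ = ATRTy.base L) →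
      Typing Γ (Δ0 ++ Δ1) (.app s t) τ
  | crecI {Γ f t b0 b1 rest} (a : List Bool) (vs : List String)
      (hlen : vs.length = (b1 :: rest : List Label).length)
      (d : Typing (Γ ++ vs.zip ((b1 :: rest).map ATRTy.base))
             [(f, mkArr (b1 :: rest) b0)] t (.base b0))
      (hside : ∀ L ∈ b0 :: b1 :: rest, L ≤ b1 → Even L) :
      Typing Γ [] (.crec a f (lams vs t)) (mkArr (b1 :: rest) b0)

/-- The derivation ends with a Subsumption inference. -/
inductive IsSubD : ∀ {Γ Δ t τ}, Typing Γ Δ t τ → Prop where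
  | mk {Γ Δ s σ τ} (d : Typing Γ Δ s σ) (h : ATRSub σ τ) : IsSubD (d.sub h)

/-- The derivation ends with an →-I inference. -/
inductive IsLamD : ∀ {Γ Δ t τ}, Typing Γ Δ t τ → Prop where
  | mk {Γ Δ v σ τ t} (d : Typing ((v, σ) :: Γ) Δ t τ) : IsLamD (Typing.lamI d)

/-- The normal form of typing derivations for plain affine recursive
definitions of `f`: (1) no Subsumption is the last line of the major premis
of an →-E inference in which `f` occurs free; (2) no Subsumption immediately
follows an →-I inference in which `f` occurs free. -/
inductive NormalFor (f : String) : ∀ {Γ Δ t τ}, Typing Γ Δ t τ → Prop where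
  | zeroI {Γ Δ} : NormalFor f (Typing.zeroI (Γ := Γ) (Δ := Δ))
  | constI {Γ Δ} (a) : NormalFor f (Typing.constI (Γ := Γ) (Δ := Δ) a)
  | oracleI {Γ Δ} (name σ) : NormalFor f (Typing.oracleI (Γ := Γ) (Δ := Δ) name σ)
  | intId {Γ Δ x σ} (h : (x, σ) ∈ Γ) : NormalFor f (Typing.intId (Δ := Δ) h)
  | affId {Γ Δ x σ} (h : (x, σ) ∈ Δ) : NormalFor f (Typing.affId (Γ := Γ) h)
  | shift {Γ s σ τ} {d : Typing Γ [] s σ} (hs : ShiftsTo σ τ) :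
      NormalFor f d → NormalFor f (d.shift hs)
  | sub {Γ Δ s σ τ} {d : Typing Γ Δ s σ} (hs : ATRSub σ τ) :
      NormalFor f d → (Freev f s → ¬ IsLamD d) → NormalFor f (d.sub hs)
  | cI {Γ Δ s L b} {d : Typing Γ Δ s (.base L)} (hc : labelComputational L) :
      NormalFor f d → NormalFor f (Typing.cI b d hc)
  | dI {Γ Δ s L} {d : Typing Γ Δ s (.base L)} :
      NormalFor f d → NormalFor f (Typing.dI d)
  | tI {Γ Δ s L b} {d : Typing Γ Δ s (.base L)} :
      NormalFor f d → NormalFor f (Typing.tI b d)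
  | downI {Γ Δ s t L0 L1} {d1 : Typing Γ Δ s (.base L0)} {d2 : Typing Γ [] t (.base L1)} :
      NormalFor f d1 → NormalFor f d2 → NormalFor f (Typing.downI d1 d2)
  | ifI {Γ Δ0 Δ1 s t0 t1 L L'} {d1 : Typing Γ [] s (.base L)}
      {d2 : Typing Γ Δ0 t0 (.base L')} {d3 : Typing Γ Δ1 t1 (.base L')} :
      NormalFor f d1 → NormalFor f d2 → NormalFor f d3 →
      NormalFor f (Typing.ifI d1 d2 d3)
  | lamI {Γ Δ v σ τ t} {d : Typing ((v, σ) :: Γ) Δ t τ} :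
      NormalFor f d → NormalFor f (Typing.lamI d)
  | appE {Γ Δ0 Δ1 s t σ τ} {d1 : Typing Γ Δ0 s (.arr σ τ)} {d2 : Typing Γ Δ1 t σ}
      (h1 : Δ0 = [] ∨ Δ1 = []) (h2 : Δ1 ≠ [] → ∃ L, σ = ATRTy.base L) :
      NormalFor f d1 → NormalFor f d2 →
      (Freev f (.app s t) → ¬ IsSubD d1) →
      NormalFor f (Typing.appE d1 d2 h1 h2)
  | crecI {Γ g t b0 b1 rest} (a : List Bool) (vs : List String)
      (hlen : vs.length = (b1 :: rest : List Label).length)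
      {d : Typing (Γ ++ vs.zip ((b1 :: rest).map ATRTy.base))
             [(g, mkArr (b1 :: rest) b0)] t (.base b0)}
      (hside : ∀ L ∈ b0 :: b1 :: rest, L ≤ b1 → Even L) :
      NormalFor f d → NormalFor f (Typing.crecI a vs hlen d hside)

/-- All variables occurring in the derivation are of strict and predicative type. -/
inductive DerivSP : ∀ {Γ Δ t τ}, Typing Γ Δ t τ → Prop where
  | zeroI {Γ Δ} : DerivSP (Typing.zeroI (Γ := Γ) (Δ := Δ))
  | constI {Γ Δ} (a) : DerivSP (Typing.constI (Γ := Γ) (Δ := Δ) a)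
  | oracleI {Γ Δ} (name σ) : DerivSP (Typing.oracleI (Γ := Γ) (Δ := Δ) name σ)
  | intId {Γ Δ x σ} (h : (x, σ) ∈ Γ) : DerivSP (Typing.intId (Δ := Δ) h)
  | affId {Γ Δ x σ} (h : (x, σ) ∈ Δ) : DerivSP (Typing.affId (Γ := Γ) h)
  | shift {Γ s σ τ} {d : Typing Γ [] s σ} (hs : ShiftsTo σ τ) :
      DerivSP d → DerivSP (d.shift hs)
  | sub {Γ Δ s σ τ} {d : Typing Γ Δ s σ} (hs : ATRSub σ τ) :
      DerivSP d → DerivSP (d.sub hs)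
  | cI {Γ Δ s L b} {d : Typing Γ Δ s (.base L)} (hc : labelComputational L) :
      DerivSP d → DerivSP (Typing.cI b d hc)
  | dI {Γ Δ s L} {d : Typing Γ Δ s (.base L)} : DerivSP d → DerivSP (Typing.dI d)
  | tI {Γ Δ s L b} {d : Typing Γ Δ s (.base L)} : DerivSP d → DerivSP (Typing.tI b d)
  | downI {Γ Δ s t L0 L1} {d1 : Typing Γ Δ s (.base L0)}
      {d2 : Typing Γ [] t (.base L1)} :
      DerivSP d1 → DerivSP d2 → DerivSP (Typing.downI d1 d2)
  | ifI {Γ Δ0 Δ1 s t0 t1 L L'} {d1 : Typing Γ [] s (.base L)}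
      {d2 : Typing Γ Δ0 t0 (.base L')} {d3 : Typing Γ Δ1 t1 (.base L')} :
      DerivSP d1 → DerivSP d2 → DerivSP d3 → DerivSP (Typing.ifI d1 d2 d3)
  | lamI {Γ Δ v σ τ t} {d : Typing ((v, σ) :: Γ) Δ t τ} :
      SPty σ → DerivSP d → DerivSP (Typing.lamI d)
  | appE {Γ Δ0 Δ1 s t σ τ} {d1 : Typing Γ Δ0 s (.arr σ τ)} {d2 : Typing Γ Δ1 t σ}
      (h1 : Δ0 = [] ∨ Δ1 = []) (h2 : Δ1 ≠ [] → ∃ L, σ = ATRTy.base L) :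
      DerivSP d1 → DerivSP d2 → DerivSP (Typing.appE d1 d2 h1 h2)
  | crecI {Γ g t b0 b1 rest} (a : List Bool) (vs : List String)
      (hlen : vs.length = (b1 :: rest : List Label).length)
      {d : Typing (Γ ++ vs.zip ((b1 :: rest).map ATRTy.base))
             [(g, mkArr (b1 :: rest) b0)] t (.base b0)}
      (hside : ∀ L ∈ b0 :: b1 :: rest, L ≤ b1 → Even L) :
      SPty (mkArr (b1 :: rest) b0) → DerivSP d →
      DerivSP (Typing.crecI a vs hlen d hside)

/-! ## Operations on time-complexity denotations -/

def cvec (X : TCEnvA → ℕ × ℕ) : TCEnvA → ℕ × ℕ :=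
  fun ϱ => (1 + (X ϱ).1, 1 + (X ϱ).2)

def dvec (X : TCEnvA → ℕ × ℕ) : TCEnvA → ℕ × ℕ :=
  fun ϱ => (1 + (X ϱ).1, (X ϱ).2)

def tstOp (X : TCEnvA → ℕ × ℕ) : TCEnvA → ℕ × ℕ :=
  fun ϱ => (1 + (X ϱ).1, 1)

def condOp (X Y Z : TCEnvA → ℕ × ℕ) : TCEnvA → ℕ × ℕ :=
  fun ϱ => (1 + (X ϱ).1 + max (Y ϱ).1 (Z ϱ).1, max (Y ϱ).2 (Z ϱ).2)

def downOp (X Y : TCEnvA → ℕ × ℕ) : TCEnvA → ℕ × ℕ :=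
  fun ϱ => (1 + (X ϱ).1 + (Y ϱ).1 + 2 * (Y ϱ).2, (Y ϱ).2)

/-- `val(p)`. -/
def valTC : (σ : ATRTy) → PotSem σ → TCSemA σ
  | .base _, p => (max 1 p, p)
  | .arr _ _, p => (1, p)

/-- `λ⋆v.X`. -/
def lamStar (x : String) (σ : ATRTy) {τ : ATRTy} (X : TCEnvA → TCSemA τ) :
    TCEnvA → TCSemA (.arr σ τ) :=
  fun ϱ => (1, fun vp => X (updTC ϱ x σ (valTC σ vp)))

/-- `X ⋆ Y`. -/
def starOp {σ τ : ATRTy} (X : TCEnvA → TCSemA (.arr σ τ)) (Y : TCEnvA → TCSemA σ) :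
    TCEnvA → TCSemA τ :=
  fun ϱ =>
    let χ := (X ϱ).2 ((Y ϱ).2)
    ((X ϱ).1 + (Y ϱ).1 + χ.1 + 1, χ.2)

/-- `dally(m, X)`. -/
def dallyOp (m : ℕ) {τ : ATRTy} (X : TCEnvA → TCSemA τ) : TCEnvA → TCSemA τ :=
  fun ϱ => (m + (X ϱ).1, (X ϱ).2)

def mkArrT : List ATRTy → ATRTy → ATRTy
  | [], τ => τ
  | σ :: σs, τ => .arr σ (mkArrT σs τ)

/-- `λ⋆x_1…x_m.X`. -/
def lamStarMulti : (ps : List (String × ATRTy)) → {τ : ATRTy} →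
    (TCEnvA → TCSemA τ) → TCEnvA → TCSemA (mkArrT (ps.map Prod.snd) τ)
  | [], _, X => X
  | (x, σ) :: ps, _, X => lamStar x σ (lamStarMulti ps X)

/-- `X ⋆ Y_1 ⋆ … ⋆ Y_m` (associating to the left). -/
def starMultiP : (ps : List (String × ATRTy)) → {τ : ATRTy} →
    (X : TCEnvA → TCSemA (mkArrT (ps.map Prod.snd) τ)) →
    (Ys : ∀ i : Fin ps.length, TCEnvA → TCSemA (ps.get i).2) →
    TCEnvA → TCSemA τ
  | [], _, X, _ => X
  | (_, _) :: ps, _, X, Y =>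
      starMultiP ps (starOp X (Y ⟨0, by simp⟩)) (fun i => Y i.succ)

/-- Simultaneous update `ϱ[x_i ↦ χ_i]`. -/
def updMulti : TCEnvA → (ps : List (String × ATRTy)) →
    (∀ i : Fin ps.length, TCSemA (ps.get i).2) → TCEnvA
  | ϱ, [], _ => ϱ
  | ϱ, (x, σ) :: ps, v => updMulti (updTC ϱ x σ (v ⟨0, by simp⟩)) ps (fun i => v i.succ)

/-- Semantic version of `f ⋆ p_1 ⋆ … ⋆ p_k` at base types. -/
def starFoldB : (bs : List Label) → {b0 : Label} → TCSemA (mkArr bs b0) →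
    (Fin bs.length → ℕ × ℕ) → ℕ × ℕ
  | [], _, χ, _ => χ
  | _ :: bs, _, χ, ar =>
      starFoldB bs
        (χ.1 + (ar ⟨0, by simp⟩).1 + (χ.2 (ar ⟨0, by simp⟩).2).1 + 1,
         (χ.2 (ar ⟨0, by simp⟩).2).2)
        (fun i => ar i.succ)

/-- `+_b` : max for oracular `b`, `+` for computational `b`. -/
def pmjLabel (b : Label) (x y : ℕ) : ℕ := if Even b then max x y else x + y

/-! ## Safe denotations and the inductive soundness assumption -/

/-- The time-complexity context `⟦Γ⟧` of an ATR typing context: a cost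
variable `x_c : T` and a potential variable `x_p : ⟨σ⟩` for each `x : σ`. -/
def tcCtx : Ctx → List TCTy
  | [] => []
  | (_, σ) :: Γ => .T :: pott σ :: tcCtx Γ

def envToSem : (Γ : Ctx) → TCEnvA → SemEnv (tcCtx Γ)
  | [], _ => SemEnv.nil
  | (x, σ) :: Γ, ϱ =>
      SemEnv.cons ((ϱ x σ).1) (SemEnv.cons ((ϱ x σ).2) (envToSem Γ ϱ))

/-- `X ≤ p` : the denotation `X` is bounded by the polynomial `p`. -/
def DenBndBy (OI : OrcI) (Γ : Ctx) (τ : ATRTy) (X : TCEnvA → TCSemA τ)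
    (p : Poly (tcCtx Γ) (tct τ)) : Prop :=
  ∀ ϱ : TCEnvA, semLe (tct τ) (X ϱ) (p.sem OI (envToSem Γ ϱ))

/-- `X` is a `b`-safe time-complexity denotation. -/
def SafeDen (OI : OrcI) (b : TCTy) (Γ : Ctx) (τ : ATRTy) (X : TCEnvA → TCSemA τ) : Prop :=
  ∃ p : Poly (tcCtx Γ) (tct τ), SafePoly b p ∧ DenBndBy OI Γ τ X p

/-- `X` is a safe (i.e. `tail(⟦τ⟧)`-safe) time-complexity denotation. -/
def IsSafeDen (OI : OrcI) (Γ : Ctx) (τ : ATRTy) (X : TCEnvA → TCSemA τ) : Prop :=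
  SafeDen OI ((tct τ).tail) Γ τ X

/-- The Inductive Soundness Assumption: `t` is a plain affine recursive
definition of the `k`-ary variable `f`, and every typeable subterm of `t` in
which `f` does not occur free is bounded by a tail-safe time-complexity
polynomial. -/
def ISA (O : Orc) (OI : OrcI) (f : String) (k : ℕ) (t : Tm) : Prop :=
  PlainAff f k t ∧
  ∀ (s : Tm) (Γ' : Ctx) (τ : ATRTy), Subterm s t → ¬ Freev f s →
    Nonempty (Typing Γ' [] s τ) →
    ∃ p : Poly (tcCtx Γ') (tct τ), SafePoly ((tct τ).tail) p ∧
      TermBound O Γ' [] τ s (fun ϱ => p.sem OI (envToSem Γ' ϱ))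

/-! ## Lengths of oracles and the standard interpretation of t.c. oracle symbols -/

/-- The length `|α|` of a (fully applied) oracle. -/
def lenOrc (O : Orc) (name : String) (ns : List ℕ) : ℕ :=
  sSup { m | ∃ vs : List (List Bool), vs.length = ns.length ∧
    (∀ (i : ℕ) (h : i < vs.length) (h' : i < ns.length),
      (vs.get ⟨i, h⟩).length ≤ ns.get ⟨i, h'⟩) ∧
    m = (O name vs).length }

/-- The canonical time complexity built from a length function
(`⟦α⟧ = (1, λn_1 (1, … (1, λn_k (1 max |α|(n⃗), |α|(n⃗)))…))`). -/
def stdOrcSem (f : List ℕ → ℕ) : List ℕ → (γ : TCTy) → γ.sem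
  | acc, .T => max 1 (f acc)
  | acc, .TL _ => f acc
  | acc, .prod a b =>
      (if b.isArrB then oneSem a else stdOrcSem f acc a, stdOrcSem f acc b)
  | acc, .arr a b => fun x => stdOrcSem f (acc ++ [toNum a x]) b

/-- The standard interpretation of time-complexity oracle symbols induced by
an oracle interpretation: `⟦α⟧` is defined from the length `|α|`. -/
def stdOI (O : Orc) : OrcI := fun name γ => stdOrcSem (lenOrc O name) [] γ

/-! ## Machinery for recursive definitions -/

def crecTm (f : String) (vs : List String) (t : Tm) (ℓ : ℕ) : Tm :=
  .crec (List.replicate ℓ false) f (lams vs t)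

/-- `ρ_{t,ℓ} = ρ[f ↦ ⟨C_{t,ℓ}, ρ⟩]`. -/
def rhoT (ρ : REnv) (f : String) (vs : List String) (t : Tm) (ℓ : ℕ) : REnv :=
  (f, Clo.mk (crecTm f vs t ℓ) ρ) :: ρ

/-- Extend an environment with actual parameters. -/
def updArgs : REnv → List String → List Clo → REnv
  | ρ, v :: vs, c :: cs => updArgs ((v, c) :: ρ) vs cs
  | ρ, _, _ => ρ

def updVars : TCEnvA → List String → List Label → List (ℕ × ℕ) → TCEnvA
  | ϱ, v :: vs, b :: bs, w :: ws => updVars (updTC ϱ v (.base b) w) vs bs ws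
  | ϱ, _, _, _ => ϱ

/-- The environment transformer realizing the syntactic substitution
`ξ_t = [cost(val(p_{ip})), pot(val(p_{ip})) / v_{ic}, v_{ip}]`. -/
def xiEnv (OI : OrcI) (Γv : Ctx) (vs : List String) (bs : List Label)
    (ps : ∀ i : Fin bs.length, Poly (tcCtx Γv) (tct (.base (bs.get i))))
    (ϱ : TCEnvA) : TCEnvA :=
  updVars ϱ vs bs
    (List.ofFn fun i : Fin bs.length =>
      (valTC (.base (bs.get i)) (((ps i).sem OI (envToSem Γv ϱ)).2) : ℕ × ℕ))

/-- Weight function counting exactly the `crec` axioms for the given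
recursive definition: used to define the recursion depth `rdp`. -/
def cntFor (f : String) (body : Tm) : Tm → ℕ
  | .crec _ g b => if g = f ∧ b = body then 1 else 0
  | _ => 0

/-! ## Reachability in (truncated) evaluations

`Reach O c c'` holds iff the closure `c'` is evaluated somewhere in some
truncated evaluation derivation of `c`: earlier premises of a rule must
genuinely evaluate (a truncated subderivation producing an actual value
contains no truncation axioms), and then control may pass into any later
premise. -/
inductive Reach (O : Orc) : Clo → Clo → Prop where
  | refl (c : Clo) : Reach O c c
  | envR {x ρ c c'} : lookup ρ x = some c → Reach O c c' →
      Reach O (.mk (.var x) ρ) c'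
  | cR {b s ρ c'} : Reach O (.mk s ρ) c' → Reach O (.mk (.c b s) ρ) c'
  | dR {s ρ c'} : Reach O (.mk s ρ) c' → Reach O (.mk (.d s) ρ) c'
  | tstR {b s ρ c'} : Reach O (.mk s ρ) c' → Reach O (.mk (.tst b s) ρ) c'
  | downR1 {s t ρ c'} : Reach O (.mk s ρ) c' → Reach O (.mk (.down s t) ρ) c'
  | downR2 {s t ρ v c'} : EvalE O (.mk s ρ) v → Reach O (.mk t ρ) c' →
      Reach O (.mk (.down s t) ρ) c'
  | condR1 {s t0 t1 ρ c'} : Reach O (.mk s ρ) c' →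
      Reach O (.mk (.cond s t0 t1) ρ) c'
  | condR2 {s t0 t1 ρ a θ c'} : EvalE O (.mk s ρ) (.mk (.const a) θ) → a ≠ [] →
      Reach O (.mk t0 ρ) c' → Reach O (.mk (.cond s t0 t1) ρ) c'
  | condR3 {s t0 t1 ρ θ c'} : EvalE O (.mk s ρ) (.mk (.const []) θ) →
      Reach O (.mk t1 ρ) c' → Reach O (.mk (.cond s t0 t1) ρ) c'
  | appR1 {s t ρ c'} : Reach O (.mk s ρ) c' → Reach O (.mk (.app s t) ρ) c'
  | appR2 {s t ρ v c'} : EvalE O (.mk s ρ) v → Reach O (.mk t ρ) c' →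
      Reach O (.mk (.app s t) ρ) c'
  | appR3 {s t ρ x s' θ' w c'} : EvalE O (.mk s ρ) (.mk (.lam x s') θ') →
      EvalE O (.mk t ρ) w → Reach O (.mk s' ((x, w) :: θ')) c' →
      Reach O (.mk (.app s t) ρ) c'

/-! ## Normal forms of time-complexity polynomials -/

def IsLamC : {Θ : List TCTy} → {γ : TCTy} → Poly Θ γ → Prop
  | _, _, .lam _ => True
  | _, _, .shiftR p _ => IsLamC p
  | _, _, .sub p _ => IsLamC p
  | _, _, _ => False

def IsPairC : {Θ : List TCTy} → {γ : TCTy} → Poly Θ γ → Prop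
  | _, _, .pair _ _ => True
  | _, _, .shiftR p _ => IsPairC p
  | _, _, .sub p _ => IsPairC p
  | _, _, _ => False

def HasRedex : {Θ : List TCTy} → {γ : TCTy} → Poly Θ γ → Prop
  | _, _, .eps => False
  | _, _, .zeros _ => False
  | _, _, .orc _ _ => False
  | _, _, .var _ => False
  | _, _, .shiftR p _ => HasRedex p
  | _, _, .sub p _ => HasRedex p
  | _, _, .add _ p q => HasRedex p ∨ HasRedex q
  | _, _, .mul _ p q => HasRedex p ∨ HasRedex q
  | _, _, .pmax _ p q => HasRedex p ∨ HasRedex q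
  | _, _, .lam p => HasRedex p
  | _, _, .app p q => IsLamC p ∨ HasRedex p ∨ HasRedex q
  | _, _, .pair p q => HasRedex p ∨ HasRedex q
  | _, _, .cost p => IsPairC p ∨ HasRedex p
  | _, _, .pot p => IsPairC p ∨ HasRedex p

/-- β-normal form. -/
def NormalFormP {Θ : List TCTy} {γ : TCTy} (p : Poly Θ γ) : Prop := ¬ HasRedex p

/-- Application chains `pot(…pot(pot(v q_1) q_2)…) q_ℓ` headed by a variable
or oracle symbol, with normal-form arguments. -/
inductive Chain : {Θ : List TCTy} → {γ : TCTy} → Poly Θ γ → Prop where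
  | var {Θ} (i : Fin (List.length Θ)) : Chain (Poly.var (Θ := Θ) i)
  | orc {Θ} (name : String) (γ : TCTy) : Chain (Poly.orc (Θ := Θ) name γ)
  | app {Θ γ δ} {t : Poly Θ (.arr γ δ)} {q : Poly Θ γ} :
      Chain t → NormalFormP q → Chain (t.app q)
  | pot {Θ γ} {t : Poly Θ (.prod .T γ)} : Chain t → Chain t.pot

/-- The classification of normal-form time-complexity polynomials. -/
inductive Classified : {Θ : List TCTy} → {γ : TCTy} → Poly Θ γ → Prop where
  | eps {Θ} : Classified (Poly.eps (Θ := Θ))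
  | zeros {Θ} (n : ℕ) : Classified (Poly.zeros (Θ := Θ) n)
  | chain {Θ γ} {p : Poly Θ γ} : Chain p → Classified p
  | cost {Θ γ} {t : Poly Θ (.prod .T γ)} : Chain t → Classified t.cost
  | add {Θ γ} {h : TCTy.computationalB γ} {q1 q2 : Poly Θ γ} :
      NormalFormP q1 → NormalFormP q2 → Classified (.add h q1 q2)
  | mul {Θ γ} {h : TCTy.computationalB γ} {q1 q2 : Poly Θ γ} :
      NormalFormP q1 → NormalFormP q2 → Classified (.mul h q1 q2)
  | pmax {Θ γ} {h : TCTy.isBase γ} {q1 q2 : Poly Θ γ} :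
      NormalFormP q1 → NormalFormP q2 → Classified (.pmax h q1 q2)
  | orc {Θ} (name : String) (γ : TCTy) : Classified (Poly.orc (Θ := Θ) name γ)
  | pair {Θ γ} {q0 : Poly Θ .T} {q1 : Poly Θ γ} :
      NormalFormP q0 → NormalFormP q1 → Classified (.pair q0 q1)
  | coeSub {Θ γ δ} {p : Poly Θ γ} (h : TCSub γ δ) : Classified p → Classified (p.sub h)
  | coeShift {Θ γ δ} {p : Poly Θ γ} (h : TCShift γ δ) :
      Classified p → Classified (p.shiftR h)

/-! ## Length polynomials and polynomial-time computability -/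

/-- The length type `|σ|` of an ATR type. -/
@[reducible] def lty : ATRTy → TCTy
  | .base L => .TL L
  | .arr σ τ => .arr (lty σ) (lty τ)

/-- Second-order length polynomials: polynomials not using oracle symbols,
pairing, or the projections (paper's Figure 6). -/
def PurePoly : {Θ : List TCTy} → {γ : TCTy} → Poly Θ γ → Prop
  | _, _, .eps => True
  | _, _, .zeros _ => True
  | _, _, .var _ => True
  | _, _, .orc _ _ => False
  | _, _, .shiftR p _ => PurePoly p
  | _, _, .sub p _ => PurePoly p
  | _, _, .add _ p q => PurePoly p ∧ PurePoly q
  | _, _, .mul _ p q => PurePoly p ∧ PurePoly q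
  | _, _, .pmax _ p q => PurePoly p ∧ PurePoly q
  | _, _, .lam p => PurePoly p
  | _, _, .app p q => PurePoly p ∧ PurePoly q
  | _, _, .pair _ _ => False
  | _, _, .cost _ => False
  | _, _, .pot _ => False

/-- The length `|α|` of an oracle, as an element of a length type. -/
def lenOrcSem (f : List ℕ → ℕ) : List ℕ → (γ : TCTy) → γ.sem
  | acc, .T => f acc
  | acc, .TL _ => f acc
  | acc, .prod a b => (lenOrcSem f acc a, lenOrcSem f acc b)
  | acc, .arr a b => fun x => lenOrcSem f (acc ++ [toNum a x]) b

/-- The environment assigning `pot(⟦α_i⟧)` to the `i`-th variable. -/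
def mkEnvPot (O : Orc) : List String → (σs : List ATRTy) → SemEnv (σs.map pott)
  | _, [] => SemEnv.nil
  | names, σ :: σs =>
      SemEnv.cons ((stdOrcSem (lenOrc O names.headI) [] (tct σ)).2)
        (mkEnvPot O names.tail σs)

/-- The environment assigning `|α_i|` to the `i`-th variable. -/
def mkEnvLen (O : Orc) : List String → (σs : List ATRTy) → SemEnv (σs.map lty)
  | _, [] => SemEnv.nil
  | names, σ :: σs =>
      SemEnv.cons (lenOrcSem (lenOrc O names.headI) [] (lty σ))
        (mkEnvLen O names.tail σs)

/-- Type-2 arguments: a string at base type, an oracle (symbol) at arrow type. -/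
def ArgVal : ATRTy → Type
  | .base _ => List Bool
  | .arr _ _ => String

def argTm : (σ : ATRTy) → ArgVal σ → Tm
  | .base _, a => .const a
  | .arr σ τ, name => .oracle name (.arr σ τ) []

def argTms : (σs : List ATRTy) → (∀ i : Fin σs.length, ArgVal (σs.get i)) → List Tm
  | [], _ => []
  | σ :: σs, a => argTm σ (a ⟨0, by simp⟩) :: argTms σs (fun i => a i.succ)

/-- The length of an argument. -/
def argLen (O : Orc) : (σ : ATRTy) → ArgVal σ → (lty σ).sem
  | .base _, a => a.length
  | .arr σ τ, name => lenOrcSem (lenOrc O name) [] (lty (.arr σ τ))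

def argLens (O : Orc) : (σs : List ATRTy) →
    (∀ i : Fin σs.length, ArgVal (σs.get i)) → SemEnv (σs.map lty)
  | [], _ => SemEnv.nil
  | σ :: σs, a =>
      SemEnv.cons (argLen O σ (a ⟨0, by simp⟩)) (argLens O σs (fun i => a i.succ))

end
end ATR

/-! The cost type `T` is the top of the subtype order, so a variable of type `T` never has a
tail strictly below `b`: in a `b`-strict polynomial all its occurrences are shadowed, and in a
`b`-chary one it can occur unshadowed only as the head of an atom, which then has type `T`. -/

namespace ATR

theorem TCSub.eq_T_of_T_left {δ : TCTy} (h : TCSub .T δ) : δ = .T := by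
  cases h
  rfl

theorem not_TCSubStrict_T_left (b : TCTy) : ¬ TCSubStrict .T b :=
  fun ⟨h, hne⟩ => hne (TCSub.eq_T_of_T_left h).symm

variable {b : TCTy} {Θ : List TCTy} {i : Fin Θ.length}

theorem StrictPoly.allShadowed_of_get_eq_T {γ : TCTy} {q : Poly Θ γ} (hq : StrictPoly b q)
    (hi : Θ.get i = .T) : AllShadowed i q :=
  (hq.2 i).resolve_left (hi ▸ not_TCSubStrict_T_left b)

theorem AtomPoly.allShadowed_or_eq_T {γ : TCTy} {t : Poly Θ γ} (ht : AtomPoly b t)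
    (hi : Θ.get i = .T) : AllShadowed i t ∨ γ = .T := by
  induction ht with
  | var j =>
      by_cases hj : (j : ℕ) = i
      · exact Or.inr (Fin.ext hj ▸ hi)
      · exact Or.inl hj
  | orc => exact Or.inl trivial
  | app _ hq ih =>
      have ht : AllShadowed i _ := ih.resolve_right TCTy.noConfusion
      exact Or.inl ⟨ht, Or.inr (hq.allShadowed_of_get_eq_T hi)⟩
  | pot _ ih => exact Or.inl (ih.resolve_right TCTy.noConfusion)

theorem CharyPoly.allShadowed_or_eq_T {γ : TCTy} {r : Poly Θ γ} (hr : CharyPoly b r)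
    (hi : Θ.get i = .T) : AllShadowed i r ∨ γ = .T := by
  induction hr with
  | zero => exact Or.inl trivial
  | atom ht => exact ht.allShadowed_or_eq_T hi
  | max _ _ ih₁ ih₂ =>
      rcases ih₁ with h₁ | hT
      · exact ih₂.imp_left (⟨h₁, ·⟩)
      · exact Or.inr hT
  | coe hsub _ ih =>
      rcases ih with h | rfl
      · exact Or.inl h
      · exact Or.inr (TCSub.eq_T_of_T_left hsub)

theorem allShadowed_of_strictPoly_of_charyPoly {L : Label} {q r : Poly Θ (.TL L)}
    (hq : StrictPoly b q) (hr : CharyPoly b r) (hi : Θ.get i = .T) :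
    AllShadowed i q ∧ AllShadowed i r :=
  ⟨hq.allShadowed_of_get_eq_T hi, (hr.allShadowed_or_eq_T hi).resolve_right TCTy.noConfusion⟩

end ATR

open ATR in
/-- If `Σ, x:T ⊢ p : T_L` is a time-complexity polynomial that is
`T_L`-safe w.r.t. `Σ, x:T`, then every occurrence of the cost-type variable `x`
in `p` is shadowed. -/
theorem statement_0 (Θ : List TCTy) (L : Label)
    (p : Poly (TCTy.T :: Θ) (TCTy.TL L))
    (hsafe : SafePoly (TCTy.TL L) p) :
    AllShadowed 0 p := by
  cases hsafe with
  | comp _ hq hr | orac _ hq hr =>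
      exact allShadowed_of_strictPoly_of_charyPoly (i := ⟨0, by simp⟩) hq hr rfl
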